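/- Let ℓ₁, ℓ₂, …, ℓₙ (n ≥ 2) be Lyndon words over a totally ordered alphabet such that ℓ₁^ω ≥ ℓ₂^ω ≥ ⋯ ≥ ℓₙ^ω in the lexicographic order on infinite words. Then ℓ₁^ω ≥ (ℓ₂ℓ₃⋯ℓₙ)^ω. -/

import Mathlib

set_option linter.unusedSectionVars false

variable {A : Type*} [LinearOrder A] [Inhabited A]

/-- The infinite periodic word `u^ω = uuu⋯`, as a function `ℕ → A`. -/
def omegaPow (u : List A) : ℕ → A := fun n => u.getD (n % u.length) default

/-- Lexicographic order on infinite words: `s < t` iff at the first position where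
they differ, `s` has the smaller letter. -/
def lexLt (s t : ℕ → A) : Prop := ∃ k, (∀ i < k, s i = t i) ∧ s k < t k

/-- Non-strict lexicographic order on infinite words. -/
def lexLe (s t : ℕ → A) : Prop := lexLt s t ∨ s = t

/-- A nonempty word `w` is a Lyndon word: `w` is lexicographically smaller than
each of its nonempty proper suffixes. -/
def IsLyndon (w : List A) : Prop :=
  w ≠ [] ∧ ∀ v, v <:+ w → v ≠ [] → v ≠ w → List.Lex (· < ·) w v

/-! ### Basic facts about `lexLt` and `lexLe` -/

theorem lexLt_asymm {s t : ℕ → A} (h1 : lexLt s t) (h2 : lexLt t s) : False := by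
  obtain ⟨k1, ha1, hl1⟩ := h1
  obtain ⟨k2, ha2, hl2⟩ := h2
  rcases lt_trichotomy k1 k2 with h | h | h
  · exact absurd (ha2 k1 h) (ne_of_gt hl1)
  · subst h; exact absurd hl2 (not_lt.mpr hl1.le)
  · exact absurd (ha1 k2 h) (ne_of_gt hl2)

theorem lexLt_trichotomy {s t : ℕ → A} (h : s ≠ t) : lexLt s t ∨ lexLt t s := by
  have hex : ∃ n, s n ≠ t n := by
    by_contra hc
    push_neg at hc
    exact h (funext hc)
  classical
  let k := Nat.find hex
  have hk : s k ≠ t k := Nat.find_spec hex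
  have hagree : ∀ i < k, s i = t i := fun i hi => by
    by_contra hc
    exact absurd hi (not_lt.mpr (Nat.find_le hc))
  rcases lt_or_gt_of_ne hk with h' | h'
  · exact Or.inl ⟨k, hagree, h'⟩
  · exact Or.inr ⟨k, fun i hi => (hagree i hi).symm, h'⟩

theorem lexLt_trans {s t r : ℕ → A} (h1 : lexLt s t) (h2 : lexLt t r) : lexLt s r := by
  obtain ⟨k1, ha1, hl1⟩ := h1
  obtain ⟨k2, ha2, hl2⟩ := h2
  rcases lt_trichotomy k1 k2 with h | h | h
  · exact ⟨k1, fun i hi => (ha1 i hi).trans (ha2 i (hi.trans h)), (ha2 k1 h) ▸ hl1⟩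
  · subst h; exact ⟨k1, fun i hi => (ha1 i hi).trans (ha2 i hi), hl1.trans hl2⟩
  · exact ⟨k2, fun i hi => (ha1 i (hi.trans h)).trans (ha2 i hi), (ha1 k2 h) ▸ hl2⟩

theorem lexLe_trans {s t r : ℕ → A} (h1 : lexLe s t) (h2 : lexLe t r) : lexLe s r := by
  rcases h1 with h1 | rfl
  · rcases h2 with h2 | rfl
    · exact Or.inl (lexLt_trans h1 h2)
    · exact Or.inl h1
  · exact h2

/-! ### Repetitions of a word -/

/-- `rep n x = x ++ x ++ ⋯ ++ x` (`n` copies). -/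
def rep (x : List A) : ℕ → List A
  | 0 => []
  | n + 1 => x ++ rep x n

theorem rep_length (x : List A) (n : ℕ) : (rep x n).length = n * x.length := by
  induction n with
  | zero => simp [rep]
  | succ n ih => simp [rep, ih]; ring

theorem rep_getD (x : List A) (n : ℕ) : ∀ i, i < n * x.length →
    (rep x n).getD i default = omegaPow x i := by
  induction n with
  | zero => intro i hi; omega
  | succ n ih =>
    intro i hi
    by_cases hip : i < x.length
    · rw [rep, List.getD_append _ _ _ _ hip]
      simp [omegaPow, Nat.mod_eq_of_lt hip]
    · push_neg at hip
      rw [rep, List.getD_append_right _ _ _ _ hip]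
      have hlt : i - x.length < n * x.length := by
        have hsm : (n + 1) * x.length = n * x.length + x.length := by ring
        omega
      rw [ih _ hlt]
      simp only [omegaPow]
      rw [Nat.mod_eq_sub_mod hip]

/-! ### Finite lexicographic facts -/

theorem lex_of_getD : ∀ (u v : List A) (k : ℕ), k < u.length → k < v.length →
    (∀ i < k, u.getD i default = v.getD i default) →
    u.getD k default < v.getD k default → List.Lex (· < ·) u v := by
  intro u
  induction u with
  | nil => intro v k hk; exact absurd hk (by simp)
  | cons a u ih =>
    intro v k hkv hk hag hlt
    match v with
    | [] => simp at hk
    | b :: v =>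
      match k with
      | 0 => exact List.Lex.rel (by simpa using hlt)
      | k + 1 =>
        have hab : a = b := by simpa using hag 0 (Nat.succ_pos k)
        subst hab
        refine List.Lex.cons (ih v k (by simpa using hkv) (by simpa using hk) ?_ (by simpa using hlt))
        intro i hi
        simpa using hag (i + 1) (by omega)

theorem lex_append_right {u v : List A} (w : List A) (hlen : u.length = v.length)
    (h : List.Lex (· < ·) u v) : List.Lex (· < ·) (u ++ w) (v ++ w) := by
  induction h with
  | @nil b l => simp at hlen
  | @rel a l b l' hab => exact List.Lex.rel hab
  | @cons a l l' h ih => exact List.Lex.cons (ih (by simpa using hlen))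

theorem lex_append_left_iff {u v : List A} (w : List A) :
    List.Lex (· < ·) (w ++ u) (w ++ v) ↔ List.Lex (· < ·) u v := by
  induction w with
  | nil => simp
  | cons a w ih =>
    simp only [List.cons_append]
    constructor
    · intro h
      cases h with
      | rel hab => exact absurd hab (lt_irrefl a)
      | cons h => exact ih.mp h
    · intro h
      exact List.Lex.cons (ih.mpr h)

theorem list_lt_iff {u v : List A} : u < v ↔ List.Lex (· < ·) u v := Iff.rfl

theorem le_append_right {u v : List A} (w : List A) (hlen : u.length = v.length)
    (h : u ≤ v) : u ++ w ≤ v ++ w := by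
  rcases lt_or_eq_of_le h with h | rfl
  · exact le_of_lt (list_lt_iff.mpr (lex_append_right w hlen (list_lt_iff.mp h)))
  · exact le_refl _

theorem le_append_left {u v : List A} (w : List A) (h : u ≤ v) : w ++ u ≤ w ++ v := by
  rcases lt_or_eq_of_le h with h | rfl
  · exact le_of_lt (list_lt_iff.mpr ((lex_append_left_iff w).mpr (list_lt_iff.mp h)))
  · exact le_refl _

/-- The commutation preorder `x ⪯ y ↔ xy ≤ yx`. -/
def pre (x y : List A) : Prop := x ++ y ≤ y ++ x

theorem pre_append_right {a b c : List A} (hb : pre a b) (hc : pre a c) :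
    pre a (b ++ c) := by
  unfold pre at *
  calc a ++ (b ++ c) = (a ++ b) ++ c := by rw [List.append_assoc]
    _ ≤ (b ++ a) ++ c := le_append_right c (by simp [Nat.add_comm]) hb
    _ = b ++ (a ++ c) := by rw [List.append_assoc]
    _ ≤ b ++ (c ++ a) := le_append_left b hc
    _ = (b ++ c) ++ a := by rw [List.append_assoc]

theorem pre_append_left {a b c : List A} (hb : pre b a) (hc : pre c a) :
    pre (b ++ c) a := by
  unfold pre at *
  calc (b ++ c) ++ a = b ++ (c ++ a) := by rw [List.append_assoc]
    _ ≤ b ++ (a ++ c) := le_append_left b hc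
    _ = (b ++ a) ++ c := by rw [List.append_assoc]
    _ ≤ (a ++ b) ++ c := le_append_right c (by simp [Nat.add_comm]) hb
    _ = a ++ (b ++ c) := by rw [List.append_assoc]

theorem pre_rep_right {x y : List A} (h : pre x y) : ∀ n, 1 ≤ n → pre x (rep y n) := by
  intro n hn
  induction n with
  | zero => omega
  | succ n ih =>
    match n, ih with
    | 0, _ => simpa [rep, pre] using h
    | n + 1, ih => exact pre_append_right h (ih (by omega))

theorem pre_rep_left {x z : List A} (h : pre x z) : ∀ m, 1 ≤ m → pre (rep x m) z := by
  intro m hm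
  induction m with
  | zero => omega
  | succ m ih =>
    match m, ih with
    | 0, _ => simpa [rep, pre] using h
    | m + 1, ih => exact pre_append_left h (ih (by omega))

/-! ### The key lemma -/

/-- If `xy ≤ yx` then it is not the case that `y^ω < x^ω`. -/
theorem not_lexLt_of_pre {x y : List A} (hx : x ≠ []) (hy : y ≠ [])
    (h : pre x y) : ¬ lexLt (omegaPow y) (omegaPow x) := by
  rintro ⟨k, hagree, hlt⟩
  have hxp : 0 < x.length := List.length_pos_iff.mpr hx
  have hyp : 0 < y.length := List.length_pos_iff.mpr hy
  set m := k + 1 with hm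
  set n := k + 1 with hn
  have hmx : k < m * x.length := by nlinarith
  have hny : k < n * y.length := by nlinarith
  set U := rep x m ++ rep y n with hU
  set V := rep y n ++ rep x m with hV
  have hUV : U ≤ V := pre_rep_left (pre_rep_right h n (by omega)) m (by omega)
  -- getD values of U and V below m * |x| resp n * |y|
  have hUget : ∀ i, i < m * x.length → U.getD i default = omegaPow x i := by
    intro i hi
    rw [hU, List.getD_append _ _ _ _ (by rw [rep_length]; exact hi)]
    exact rep_getD x m i hi
  have hVget : ∀ i, i < n * y.length → V.getD i default = omegaPow y i := by
    intro i hi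
    rw [hV, List.getD_append _ _ _ _ (by rw [rep_length]; exact hi)]
    exact rep_getD y n i hi
  have hVU : V < U := by
    refine list_lt_iff.mpr (lex_of_getD V U k ?_ ?_ ?_ ?_)
    · simp only [hV, List.length_append, rep_length]; nlinarith
    · simp only [hU, List.length_append, rep_length]; nlinarith
    · intro i hi
      rw [hUget i (by omega), hVget i (by omega)]
      exact hagree i hi
    · rw [hUget k hmx, hVget k hny]
      exact hlt
  exact absurd hUV (not_le.mpr hVU)

theorem omegaPow_eq_append_comm {u v : List A} (hu : u ≠ []) (hv : v ≠ [])
    (h : omegaPow u = omegaPow v) : u ++ v = v ++ u := by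
  have hup : 0 < u.length := List.length_pos_iff.mpr hu
  have hvp : 0 < v.length := List.length_pos_iff.mpr hv
  have huv : ∀ i, omegaPow u i = omegaPow v i := fun i => congrFun h i
  have hperiod_u : ∀ i, u.length ≤ i → omegaPow u i = omegaPow u (i - u.length) := by
    intro i hi
    simp only [omegaPow]
    rw [Nat.mod_eq_sub_mod hi]
  have key : ∀ i, (u ++ v).getD i default = (v ++ u).getD i default := by
    intro i
    by_cases hi : i < u.length + v.length
    · have h1 : (u ++ v).getD i default = omegaPow u i := by
        by_cases hiu : i < u.length
        · rw [List.getD_append _ _ _ _ hiu]; simp [omegaPow, Nat.mod_eq_of_lt hiu]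
        · push_neg at hiu
          rw [List.getD_append_right _ _ _ _ hiu, hperiod_u i hiu]
          have hlt : i - u.length < v.length := by omega
          rw [huv (i - u.length)]
          simp [omegaPow, Nat.mod_eq_of_lt hlt]
      have h2 : (v ++ u).getD i default = omegaPow v i := by
        by_cases hiv : i < v.length
        · rw [List.getD_append _ _ _ _ hiv]; simp [omegaPow, Nat.mod_eq_of_lt hiv]
        · push_neg at hiv
          rw [List.getD_append_right _ _ _ _ hiv]
          have hlt : i - v.length < u.length := by omega
          have : omegaPow v i = omegaPow v (i - v.length) := by
            simp only [omegaPow]; rw [Nat.mod_eq_sub_mod hiv]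
          rw [this, ← huv (i - v.length)]
          simp [omegaPow, Nat.mod_eq_of_lt hlt]
      rw [h1, h2, huv i]
    · push_neg at hi
      rw [List.getD_eq_default _ _ (by simpa using hi),
        List.getD_eq_default _ _ (by simp; omega)]
  have hlen : (u ++ v).length = (v ++ u).length := by simp [Nat.add_comm]
  apply List.ext_getElem hlen
  intro i h1 h2
  have := key i
  rwa [List.getD_eq_getElem _ _ h1, List.getD_eq_getElem _ _ h2] at this

/-- Main lemma: if `v^ω ≤ u^ω` then `(uv)^ω ≤ u^ω`. -/
theorem omegaPow_append_le {u v : List A} (hu : u ≠ []) (hv : v ≠ [])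
    (h : lexLe (omegaPow v) (omegaPow u)) :
    lexLe (omegaPow (u ++ v)) (omegaPow u) := by
  -- Step 1 : vu ≤ uv
  have h1 : v ++ u ≤ u ++ v := by
    rcases le_total (v ++ u) (u ++ v) with h' | h'
    · exact h'
    · -- u ++ v ≤ v ++ u, i.e. pre u v, so ¬ v^ω < u^ω, hence u^ω = v^ω
      have hnlt := not_lexLt_of_pre hu hv h'
      rcases h with h | heq
      · exact absurd h hnlt
      · rw [omegaPow_eq_append_comm hu hv heq.symm]
  -- Step 2 : (uv)u ≤ u(uv), i.e. pre (u++v) u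
  have h2 : pre (u ++ v) u := by
    unfold pre
    calc (u ++ v) ++ u = u ++ (v ++ u) := by rw [List.append_assoc]
      _ ≤ u ++ (u ++ v) := le_append_left u h1
  have h3 := not_lexLt_of_pre (by simp [hu]) hu h2
  by_cases heq : omegaPow (u ++ v) = omegaPow u
  · exact Or.inr heq
  · rcases lexLt_trichotomy heq with h' | h'
    · exact Or.inl h'
    · exact absurd h' h3

/-- For a nonempty list of nonempty words in weakly decreasing `ω`-power order,
the `ω`-power of the concatenation is at most the `ω`-power of the head. -/
theorem flatten_omegaPow_le_head (M : List (List A)) (hM : M ≠ [])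
    (hne : ∀ l ∈ M, l ≠ [])
    (hchain : ∀ i : ℕ, (h : i + 1 < M.length) →
      lexLe (omegaPow (M[i + 1]'h)) (omegaPow (M[i]'(Nat.lt_of_succ_lt h)))) :
    lexLe (omegaPow M.flatten) (omegaPow M.headI) := by
  induction M with
  | nil => exact absurd rfl hM
  | cons x M ih =>
    match M with
    | [] => simp [lexLe]
    | y :: M' =>
      have hx : x ≠ [] := hne x (by simp)
      have hy : y ≠ [] := hne y (by simp)
      have htail : lexLe (omegaPow (y :: M').flatten) (omegaPow y) := by
        refine ih (by simp) (fun l hl => hne l (by simp [hl])) ?_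
        intro i hi
        have := hchain (i + 1) (Nat.succ_lt_succ hi)
        simpa using this
      have hhead : lexLe (omegaPow y) (omegaPow x) := by
        have := hchain 0 (by simp)
        simpa using this
      have hflne : (y :: M').flatten ≠ [] := by
        simp only [List.flatten_cons]
        intro hc
        exact hy (List.append_eq_nil_iff.mp hc).1
      have := omegaPow_append_le hx hflne (lexLe_trans htail hhead)
      simpa using this

/-- If `ℓ₁, ℓ₂, …, ℓₙ` (`n ≥ 2`) are Lyndon words with
`ℓ₁^ω ≥ ℓ₂^ω ≥ ⋯ ≥ ℓₙ^ω`, then `ℓ₁^ω ≥ (ℓ₂ℓ₃⋯ℓₙ)^ω`. -/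
theorem head_omegaPow_ge_tail_flatten (L : List (List A)) (hlen : 2 ≤ L.length)
    (hLyn : ∀ l ∈ L, IsLyndon l)
    (hchain : ∀ i : ℕ, (h : i + 1 < L.length) →
      lexLe (omegaPow (L[i + 1]'h)) (omegaPow (L[i]'(by omega)))) :
    lexLe (omegaPow L.tail.flatten) (omegaPow L.headI) := by
  match L, hlen with
  | x :: y :: M, _ =>
    have hne : ∀ l ∈ (y :: M), l ≠ [] := fun l hl =>
      (hLyn l (by simp [hl])).1
    have htail : lexLe (omegaPow (y :: M).flatten) (omegaPow y) := by
      refine flatten_omegaPow_le_head (y :: M) (by simp) hne ?_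
      intro i hi
      have := hchain (i + 1) (Nat.succ_lt_succ hi)
      simpa using this
    have hhead : lexLe (omegaPow y) (omegaPow x) := by
      have := hchain 0 (by simp)
      simpa using this
    simpa using lexLe_trans htail hhead
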